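/- arXiv:1403.7605 — 4 statements merged into one kernel-verified Lean document; each statement's English description precedes it below -/
import Mathlib

section
/- Let G be an n-resource selection game. For every nonempty R ⊆ {1,…,n}, every two Nash equilibria s and s' of G, every k ∈ R with s_k(R) > 0 and every k' ∈ R with s'_{k'}(R) > 0, one has h_k^s = h_{k'}^{s'}; i.e., every player type experiences the same cost in all Nash equilibria. -/
/-!
Both equilibria satisfy the variational inequality `∑ⱼ hⱼ ℓⱼ ≤ ∑ⱼ hⱼ ℓ'ⱼ` against any other
profile, since each type only uses its cheapest resources. Adding the two inequalities gives
`∑ⱼ (hⱼ - h'ⱼ)(ℓⱼ - ℓ'ⱼ) ≤ 0`, while monotonicity of the cost functions makes every summand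
nonnegative. Hence every summand vanishes, so every resource has the same cost in both
equilibria, and the claim follows from the equilibrium conditions of `s` and `s'`.
-/

open scoped NNReal

namespace RSG

/-- A consumption profile in an `n`-resource selection game: each nonempty type
`R ⊆ [n]` distributes its mass `μ R` among the resources in `R`. -/
def IsProfile (n : ℕ) (μ : Finset (Fin n) → ℝ≥0) (s : Finset (Fin n) → Fin n → ℝ≥0) : Prop :=
  (∀ R : Finset (Fin n), ∀ j : Fin n, j ∉ R → s R j = 0) ∧
  (∀ R : Finset (Fin n), R.Nonempty → ∑ j ∈ R, s R j = μ R)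

/-- The load on resource `j` in profile `s`. -/
def load (n : ℕ) (s : Finset (Fin n) → Fin n → ℝ≥0) (j : Fin n) : ℝ≥0 :=
  ∑ R : Finset (Fin n), s R j

/-- The cost of resource `j` in profile `s`. -/
def cost (n : ℕ) (f : Fin n → ℝ≥0 → ℝ) (s : Finset (Fin n) → Fin n → ℝ≥0) (j : Fin n) : ℝ :=
  f j (load n s j)

/-- A Nash equilibrium. -/
def IsNash (n : ℕ) (f : Fin n → ℝ≥0 → ℝ) (μ : Finset (Fin n) → ℝ≥0)
    (s : Finset (Fin n) → Fin n → ℝ≥0) : Prop :=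
  IsProfile n μ s ∧
  ∀ R : Finset (Fin n), ∀ k ∈ R, 0 < s R k → ∀ j ∈ R, cost n f s k ≤ cost n f s j

/-- A strong Nash equilibrium: a Nash equilibrium `s` such that there is no
consumption profile `s' ≠ s` in which every player who strictly increases its
consumption of some resource `k` (i.e. `s' R k > s R k`) pays, at `k` in `s'`,
strictly less than the common equilibrium cost `h^R` of its type
(expressed via: less than `cost s j` for every `j` in the support of `s R`). -/
def IsStrong (n : ℕ) (f : Fin n → ℝ≥0 → ℝ) (μ : Finset (Fin n) → ℝ≥0)
    (s : Finset (Fin n) → Fin n → ℝ≥0) : Prop :=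
  IsNash n f μ s ∧
  ¬ ∃ s' : Finset (Fin n) → Fin n → ℝ≥0, IsProfile n μ s' ∧ s' ≠ s ∧
    ∀ R : Finset (Fin n), ∀ k : Fin n, s R k < s' R k →
      ∀ j : Fin n, 0 < s R j → cost n f s' k < cost n f s j

end RSG

open RSG

open Finset

theorem Finset.sum_mul_le_sum_mul_of_support_isMin {ι : Type*} (R : Finset ι) (c x y : ι → ℝ)
    (hx : ∀ k ∈ R, x k ≠ 0 → ∀ j ∈ R, c k ≤ c j) (hy : ∀ j ∈ R, 0 ≤ y j)
    (hxy : ∑ j ∈ R, x j = ∑ j ∈ R, y j) :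
    ∑ j ∈ R, c j * x j ≤ ∑ j ∈ R, c j * y j := by
  rcases R.eq_empty_or_nonempty with rfl | hR
  · simp
  obtain ⟨i, hi, hmin⟩ := R.exists_min_image c hR
  have hsupp : ∀ k ∈ R, c k * x k = c i * x k := by
    intro k hk
    by_cases hxk : x k = 0
    · simp [hxk]
    · rw [le_antisymm (hx k hk hxk i hi) (hmin k hk)]
  calc ∑ j ∈ R, c j * x j = c i * ∑ j ∈ R, y j := by rw [sum_congr rfl hsupp, ← mul_sum, hxy]
    _ = ∑ j ∈ R, c i * y j := mul_sum ..
    _ ≤ ∑ j ∈ R, c j * y j := sum_le_sum fun j hj => by gcongr; exacts [hy j hj, hmin j hj]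

theorem Monotone.sub_mul_sub_nonneg {g : ℝ≥0 → ℝ} (hg : Monotone g) (a b : ℝ≥0) :
    0 ≤ (g a - g b) * ((a : ℝ) - b) := by
  rcases le_total a b with hab | hab
  · exact mul_nonneg_of_nonpos_of_nonpos (sub_nonpos.2 (hg hab)) (sub_nonpos.2 hab)
  · exact mul_nonneg (sub_nonneg.2 (hg hab)) (sub_nonneg.2 hab)

namespace RSG

variable {n : ℕ} {f : Fin n → ℝ≥0 → ℝ} {μ : Finset (Fin n) → ℝ≥0}
  {s t : Finset (Fin n) → Fin n → ℝ≥0}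

theorem IsProfile.sum_mul_load (hs : IsProfile n μ s) (c : Fin n → ℝ) :
    ∑ j, c j * (load n s j : ℝ) = ∑ R, ∑ j ∈ R, c j * (s R j : ℝ) := by
  simp only [load, NNReal.coe_sum, mul_sum]
  rw [sum_comm]
  refine sum_congr rfl fun R _ => (sum_subset R.subset_univ fun j _ hj => ?_).symm
  simp [hs.1 R j hj]

theorem IsProfile.sum_coe_eq (hs : IsProfile n μ s) (ht : IsProfile n μ t) (R : Finset (Fin n)) :
    ∑ j ∈ R, (s R j : ℝ) = ∑ j ∈ R, (t R j : ℝ) := by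
  rcases R.eq_empty_or_nonempty with rfl | hR
  · simp
  · rw [← NNReal.coe_sum, ← NNReal.coe_sum, hs.2 R hR, ht.2 R hR]

theorem IsNash.sum_cost_mul_load_le (hs : IsNash n f μ s) (ht : IsProfile n μ t) :
    ∑ j, cost n f s j * (load n s j : ℝ) ≤ ∑ j, cost n f s j * (load n t j : ℝ) := by
  rw [hs.1.sum_mul_load, ht.sum_mul_load]
  refine sum_le_sum fun R _ => R.sum_mul_le_sum_mul_of_support_isMin _ _ _
    (fun k hk hsk => hs.2 R k hk (pos_iff_ne_zero.2 (NNReal.coe_ne_zero.1 hsk)))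
    (fun j _ => (t R j).coe_nonneg) (hs.1.sum_coe_eq ht R)

theorem IsNash.cost_eq (hmono : ∀ j, Monotone (f j)) (hs : IsNash n f μ s)
    (ht : IsNash n f μ t) (j : Fin n) : cost n f s j = cost n f t j := by
  have hterm : ∀ i, 0 ≤ (cost n f s i - cost n f t i) * ((load n s i : ℝ) - load n t i) :=
    fun i => (hmono i).sub_mul_sub_nonneg _ _
  have hsum : ∑ i, (cost n f s i - cost n f t i) * ((load n s i : ℝ) - load n t i) ≤ 0 := by
    have hvs := hs.sum_cost_mul_load_le ht.1
    have hvt := ht.sum_cost_mul_load_le hs.1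
    simp only [sub_mul, mul_sub, sum_sub_distrib]
    linarith
  have hzero := (sum_eq_zero_iff_of_nonneg fun i _ => hterm i).1
    (hsum.antisymm (sum_nonneg fun i _ => hterm i)) j (mem_univ j)
  rcases mul_eq_zero.1 hzero with hcost | hload
  · exact sub_eq_zero.1 hcost
  · rw [cost, cost, NNReal.coe_injective (sub_eq_zero.1 hload)]

end RSG

theorem players_indifferent_between_nash_general (n : ℕ) (f : Fin n → ℝ≥0 → ℝ)
    (μ : Finset (Fin n) → ℝ≥0) (hmono : ∀ j, Monotone (f j))
    (s s' : Finset (Fin n) → Fin n → ℝ≥0)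
    (hs : IsNash n f μ s) (hs' : IsNash n f μ s')
    (R : Finset (Fin n))
    (k : Fin n) (hk : k ∈ R) (hks : 0 < s R k)
    (k' : Fin n) (hk' : k' ∈ R) (hk's : 0 < s' R k') :
    cost n f s k = cost n f s' k' := by
  have h₁ : cost n f s k ≤ cost n f s k' := hs.2 R k hk hks k' hk'
  have h₂ : cost n f s' k' ≤ cost n f s' k := hs'.2 R k' hk' hk's k hk
  rw [hs.cost_eq hmono hs' k] at h₁ ⊢
  rw [hs.cost_eq hmono hs' k'] at h₁
  exact le_antisymm h₁ h₂

/-- Players are indifferent between Nash equilibria: for every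
type `R` and any two Nash equilibria `s, s'`, any resource `k ∈ R` used by type
`R` in `s` and any `k' ∈ R` used by type `R` in `s'` have the same cost. -/
theorem players_indifferent_between_nash (n : ℕ) (f : Fin n → ℝ≥0 → ℝ)
    (μ : Finset (Fin n) → ℝ≥0) (hmono : ∀ j, Monotone (f j))
    (s s' : Finset (Fin n) → Fin n → ℝ≥0)
    (hs : IsNash n f μ s) (hs' : IsNash n f μ s')
    (R : Finset (Fin n)) (hR : R.Nonempty)
    (k : Fin n) (hk : k ∈ R) (hks : 0 < s R k)
    (k' : Fin n) (hk' : k' ∈ R) (hk's : 0 < s' R k') :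
    cost n f s k = cost n f s' k' :=
  players_indifferent_between_nash_general n f μ hmono s s' hs hs' R k hk hks k' hk' hk's
end

section
/- Let G be an n-resource selection game (with nondecreasing, not necessarily continuous, cost functions). Every Nash equilibrium of G is a strong Nash equilibrium. -/
/-!
A resource `k` onto which some type `R` shifts consumption must, in the deviation, cost less
than `h^R ≤ h_k`; as `f k` is monotone, the load of `k` strictly drops. Hence no load grows
(a load can only grow if some type increases its consumption there), while some load strictly
drops because a deviation `s' ≠ s` has to move mass onto some resource. This contradicts the
fact that the total load `∑ μ^R` is the same in every profile.
-/

open scoped NNReal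

namespace RSG

open Finset

variable {n : ℕ} {f : Fin n → ℝ≥0 → ℝ} {μ : Finset (Fin n) → ℝ≥0}
  {s s' : Finset (Fin n) → Fin n → ℝ≥0}

def IsImprovingDeviation (n : ℕ) (f : Fin n → ℝ≥0 → ℝ)
    (s s' : Finset (Fin n) → Fin n → ℝ≥0) : Prop :=
  ∀ R : Finset (Fin n), ∀ k : Fin n, s R k < s' R k →
    ∀ j : Fin n, 0 < s R j → cost n f s' k < cost n f s j

namespace IsProfile

theorem mem_of_pos (hs : IsProfile n μ s) {R : Finset (Fin n)} {k : Fin n} (hk : 0 < s R k) :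
    k ∈ R := by
  by_contra h
  simp [hs.1 R k h] at hk

theorem sum_univ_eq_sum (hs : IsProfile n μ s) (R : Finset (Fin n)) :
    ∑ j, s R j = ∑ j ∈ R, s R j :=
  (sum_subset (subset_univ R) fun k _ hk => hs.1 R k hk).symm

theorem sum_univ_eq (hs : IsProfile n μ s) (hs' : IsProfile n μ s') (R : Finset (Fin n)) :
    ∑ j, s' R j = ∑ j, s R j := by
  rw [hs.sum_univ_eq_sum, hs'.sum_univ_eq_sum]
  rcases R.eq_empty_or_nonempty with rfl | hR
  · simp only [sum_empty]
  · rw [hs.2 R hR, hs'.2 R hR]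

theorem sum_load_eq (hs : IsProfile n μ s) (hs' : IsProfile n μ s') :
    ∑ k, load n s' k = ∑ k, load n s k := by
  simp only [load]
  rw [sum_comm, sum_comm (γ := Fin n)]
  exact sum_congr rfl fun R _ => hs.sum_univ_eq hs' R

theorem exists_lt_of_ne (hs : IsProfile n μ s) (hs' : IsProfile n μ s') (hne : s' ≠ s) :
    ∃ R k, s R k < s' R k := by
  by_contra! h
  refine hne (funext fun R => funext fun k => ?_)
  exact (sum_eq_sum_iff_of_le fun k _ => h R k).1 (hs.sum_univ_eq hs' R) k (mem_univ k)

theorem exists_pos_of_lt (hs : IsProfile n μ s) (hs' : IsProfile n μ s')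
    {R : Finset (Fin n)} {k : Fin n} (h : s R k < s' R k) : ∃ j, 0 < s R j := by
  by_contra! h0
  have hzero : ∑ j, s' R j = 0 := by
    rw [hs.sum_univ_eq hs' R]
    exact sum_eq_zero fun j _ => nonpos_iff_eq_zero.1 (h0 j)
  have hk : s' R k ≤ ∑ j, s' R j := single_le_sum (fun j _ => zero_le) (mem_univ k)
  exact (h.trans_le (hk.trans hzero.le)).not_ge zero_le

end IsProfile

namespace IsNash

theorem load_lt_of_lt (hs : IsNash n f μ s) (hs' : IsProfile n μ s')
    (hdev : IsImprovingDeviation n f s s') {R : Finset (Fin n)} {k : Fin n}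
    (hmono : Monotone (f k)) (h : s R k < s' R k) : load n s' k < load n s k := by
  obtain ⟨j, hj⟩ := hs.1.exists_pos_of_lt hs' h
  have hkR : k ∈ R := hs'.mem_of_pos (zero_le.trans_lt h)
  exact hmono.reflect_lt ((hdev R k h j hj).trans_le (hs.2 R j (hs.1.mem_of_pos hj) hj k hkR))

theorem load_le (hs : IsNash n f μ s) (hs' : IsProfile n μ s')
    (hdev : IsImprovingDeviation n f s s') (hmono : ∀ j, Monotone (f j)) (k : Fin n) :
    load n s' k ≤ load n s k := by
  by_contra! h
  obtain ⟨R, -, hR⟩ := exists_lt_of_sum_lt h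
  exact (hs.load_lt_of_lt hs' hdev (hmono k) hR).not_gt h

theorem not_isImprovingDeviation (hs : IsNash n f μ s) (hs' : IsProfile n μ s')
    (hmono : ∀ j, Monotone (f j)) (hne : s' ≠ s) : ¬ IsImprovingDeviation n f s s' := by
  intro hdev
  obtain ⟨R, k, hk⟩ := hs.1.exists_lt_of_ne hs' hne
  have hlt : ∑ j, load n s' j < ∑ j, load n s j :=
    sum_lt_sum (fun j _ => hs.load_le hs' hdev hmono j)
      ⟨k, mem_univ k, hs.load_lt_of_lt hs' hdev (hmono k) hk⟩
  exact hlt.ne (hs.1.sum_load_eq hs')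

end IsNash

end RSG

open RSG

/-- In every `n`-resource selection game (nondecreasing, not
necessarily continuous, cost functions), every Nash equilibrium is strong. -/
theorem nash_is_strong (n : ℕ) (f : Fin n → ℝ≥0 → ℝ)
    (μ : Finset (Fin n) → ℝ≥0) (hmono : ∀ j, Monotone (f j))
    (s : Finset (Fin n) → Fin n → ℝ≥0) (hs : IsNash n f μ s) :
    IsStrong n f μ s :=
  ⟨hs, fun ⟨_, hs', hne, hdev⟩ => hs.not_isImprovingDeviation hs' hmono hne hdev⟩
end

section
/- Let G be an n-resource selection game and let s be a Nash equilibrium of G such that for every j ∈ {1,…,n}, the equilibrium cost h_j^s is not a plateau height of f_j. Then every Nash equilibrium of G is a super-strong Nash equilibrium. -/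
open scoped NNReal

open RSG

/-- `h` is a plateau height of `f` if `f` attains the value `h` at two distinct points. -/
def IsPlateauHeight (f : ℝ≥0 → ℝ) (h : ℝ) : Prop :=
  ∃ x y : ℝ≥0, x ≠ y ∧ f x = h ∧ f y = h

/-- A super-strong Nash equilibrium: a Nash equilibrium `s` such that there is
no consumption profile `s'` in which every player who strictly increases its
consumption of some resource `k` pays at `k` in `s'` at most the equilibrium
cost `h^R` of its type, while at least one pair of a type `R` and a resource
`k` in the support of `s' R` pays strictly less than `h^R`. -/
def IsSuperStrong (n : ℕ) (f : Fin n → ℝ≥0 → ℝ) (μ : Finset (Fin n) → ℝ≥0)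
    (s : Finset (Fin n) → Fin n → ℝ≥0) : Prop :=
  RSG.IsNash n f μ s ∧
  ¬ ∃ s' : Finset (Fin n) → Fin n → ℝ≥0, RSG.IsProfile n μ s' ∧
    (∀ R : Finset (Fin n), ∀ k : Fin n, s R k < s' R k →
      ∀ j : Fin n, 0 < s R j → RSG.cost n f s' k ≤ RSG.cost n f s j) ∧
    (∃ R : Finset (Fin n), ∃ k : Fin n, 0 < s' R k ∧
      ∀ j : Fin n, 0 < s R j → RSG.cost n f s' k < RSG.cost n f s j)

/-!
In an equilibrium every type uses only its cheapest resources, which gives the variational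
inequality `⟨ℓˢ, hˢ⟩ ≤ ⟨ℓˢ', hˢ⟩` against any profile `s'`. Applied to two equilibria `s, s₀` in
both directions, it makes `∑ⱼ (hⱼˢ - hⱼˢ⁰)(ℓⱼˢ - ℓⱼˢ⁰) ≤ 0`, while monotonicity makes every term
nonnegative; so every term vanishes, and as `hⱼˢ⁰` is not a plateau height all loads coincide. Hence
the equilibrium costs of `s` are not plateau heights either. A deviation `s'` that harms nobody
cannot raise a load `ℓₖ`: the type raising its use of `k` would pay
`f k (ℓₖˢ') ≤ h^R ≤ hₖˢ ≤ f k (ℓₖˢ')`, a plateau. As the total load is fixed, `s'` has the same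
loads, hence the same costs as `s`, so nobody gains strictly.
-/

namespace RSG

variable {n : ℕ} {f : Fin n → ℝ≥0 → ℝ} {μ : Finset (Fin n) → ℝ≥0}
  {s s' : Finset (Fin n) → Fin n → ℝ≥0}

lemma IsProfile.mem_of_pos_s5 (hs : IsProfile n μ s) {R : Finset (Fin n)} {k : Fin n}
    (hk : 0 < s R k) : k ∈ R := by
  by_contra h
  simp [hs.1 R k h] at hk

lemma IsProfile.sum_eq (hs : IsProfile n μ s) (hs' : IsProfile n μ s') (R : Finset (Fin n)) :
    ∑ j, s R j = ∑ j, s' R j := by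
  have sum_univ : ∀ t, IsProfile n μ t → ∑ j, t R j = ∑ j ∈ R, t R j := fun t ht =>
    (Finset.sum_subset (Finset.subset_univ R) fun j _ hj => ht.1 R j hj).symm
  rw [sum_univ s hs, sum_univ s' hs']
  rcases R.eq_empty_or_nonempty with rfl | hR
  · simp
  · rw [hs.2 R hR, hs'.2 R hR]

lemma IsProfile.exists_pos_of_pos (hs : IsProfile n μ s) (hs' : IsProfile n μ s')
    {R : Finset (Fin n)} {k : Fin n} (hk : 0 < s' R k) : ∃ j, 0 < s R j := by
  have hsum : 0 < ∑ j, s R j :=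
    hs.sum_eq hs' R ▸ hk.trans_le (Finset.single_le_sum (by simp) (Finset.mem_univ k))
  simpa using Finset.sum_pos_iff.mp hsum

lemma IsProfile.sum_load_eq_s5 (hs : IsProfile n μ s) (hs' : IsProfile n μ s') :
    ∑ j, load n s j = ∑ j, load n s' j := by
  simp only [load]
  rw [Finset.sum_comm, Finset.sum_comm (f := fun j R => s' R j)]
  exact Finset.sum_congr rfl fun R _ => hs.sum_eq hs' R

lemma IsNash.cost_le_of_pos (hs : IsNash n f μ s) {R : Finset (Fin n)} {j k : Fin n}
    (hk : 0 < s R k) (hj : j ∈ R) : cost n f s k ≤ cost n f s j :=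
  hs.2 R k (hs.1.mem_of_pos_s5 hk) hk j hj

lemma IsNash.sum_mul_cost_le (hs : IsNash n f μ s) (hs' : IsProfile n μ s')
    (R : Finset (Fin n)) :
    ∑ j, (s R j : ℝ) * cost n f s j ≤ ∑ j, (s' R j : ℝ) * cost n f s j := by
  by_cases hR : ∃ k, 0 < s R k
  · obtain ⟨k, hk⟩ := hR
    have hsum : ∑ j, (s R j : ℝ) = ∑ j, (s' R j : ℝ) := by exact_mod_cast hs.1.sum_eq hs' R
    calc ∑ j, (s R j : ℝ) * cost n f s j = ∑ j, (s R j : ℝ) * cost n f s k :=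
          Finset.sum_congr rfl fun j _ => by
            rcases eq_zero_or_pos (s R j) with hj | hj
            · simp [hj]
            · rw [le_antisymm (hs.cost_le_of_pos hj (hs.1.mem_of_pos_s5 hk))
                (hs.cost_le_of_pos hk (hs.1.mem_of_pos_s5 hj))]
      _ = ∑ j, (s' R j : ℝ) * cost n f s k := by rw [← Finset.sum_mul, ← Finset.sum_mul, hsum]
      _ ≤ ∑ j, (s' R j : ℝ) * cost n f s j := Finset.sum_le_sum fun j _ => by
            rcases eq_zero_or_pos (s' R j) with hj | hj
            · simp [hj]
            · exact mul_le_mul_of_nonneg_left (hs.cost_le_of_pos hk (hs'.mem_of_pos_s5 hj))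
                (s' R j).coe_nonneg
  · simp only [not_exists, not_lt] at hR
    have hs_zero : ∀ j, s R j = 0 := fun j => nonpos_iff_eq_zero.mp (hR j)
    have hs'_zero : ∀ j, s' R j = 0 := by
      simpa [hs_zero, Finset.sum_eq_zero_iff, eq_comm] using hs.1.sum_eq hs' R
    simp [hs_zero, hs'_zero]

lemma IsNash.sum_load_mul_cost_le (hs : IsNash n f μ s) (hs' : IsProfile n μ s') :
    ∑ j, (load n s j : ℝ) * cost n f s j ≤ ∑ j, (load n s' j : ℝ) * cost n f s j := by
  simp only [load, NNReal.coe_sum, Finset.sum_mul]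
  rw [Finset.sum_comm, Finset.sum_comm (f := fun j R => (s' R j : ℝ) * cost n f s j)]
  exact Finset.sum_le_sum fun R _ => hs.sum_mul_cost_le hs' R

lemma IsNash.sum_cost_sub_mul_load_sub_nonpos {s₀ : Finset (Fin n) → Fin n → ℝ≥0}
    (hs₀ : IsNash n f μ s₀) (hs : IsNash n f μ s) :
    ∑ j, (cost n f s j - cost n f s₀ j) * ((load n s j : ℝ) - load n s₀ j) ≤ 0 := by
  have hs_var := hs.sum_load_mul_cost_le hs₀.1
  have hs₀_var := hs₀.sum_load_mul_cost_le hs.1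
  have expand : ∑ j, (cost n f s j - cost n f s₀ j) * ((load n s j : ℝ) - load n s₀ j) =
      (∑ j, (load n s j : ℝ) * cost n f s j - ∑ j, (load n s₀ j : ℝ) * cost n f s j) +
      (∑ j, (load n s₀ j : ℝ) * cost n f s₀ j - ∑ j, (load n s j : ℝ) * cost n f s₀ j) := by
    simp only [← Finset.sum_sub_distrib, ← Finset.sum_add_distrib]
    exact Finset.sum_congr rfl fun j _ => by ring
  linarith

lemma IsNash.load_eq_of_not_isPlateauHeight (hmono : ∀ j, Monotone (f j))
    {s₀ : Finset (Fin n) → Fin n → ℝ≥0} (hs₀ : IsNash n f μ s₀)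
    (hplateau : ∀ j, ¬ IsPlateauHeight (f j) (cost n f s₀ j)) (hs : IsNash n f μ s)
    (j : Fin n) : load n s j = load n s₀ j := by
  have hterm_nonneg : ∀ j ∈ Finset.univ,
      0 ≤ (cost n f s j - cost n f s₀ j) * ((load n s j : ℝ) - load n s₀ j) := fun j _ =>
    ((hmono j).monovary NNReal.coe_mono).sub_mul_sub_nonneg _ _
  have hterm_zero := (Finset.sum_eq_zero_iff_of_nonneg hterm_nonneg).mp
    (le_antisymm (hs₀.sum_cost_sub_mul_load_sub_nonpos hs) (Finset.sum_nonneg hterm_nonneg))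
    j (Finset.mem_univ j)
  by_contra hne
  have hcost : cost n f s j - cost n f s₀ j = 0 :=
    (mul_eq_zero.mp hterm_zero).resolve_right (sub_ne_zero.mpr (NNReal.coe_injective.ne hne))
  exact hplateau j ⟨load n s j, load n s₀ j, hne, sub_eq_zero.mp hcost, rfl⟩

lemma IsNash.load_le_of_forall_cost_le (hmono : ∀ j, Monotone (f j)) (hs : IsNash n f μ s)
    (hplateau : ∀ j, ¬ IsPlateauHeight (f j) (cost n f s j)) (hs' : IsProfile n μ s')
    (hle : ∀ R k, s R k < s' R k → ∀ j, 0 < s R j → cost n f s' k ≤ cost n f s j)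
    (k : Fin n) : load n s' k ≤ load n s k := by
  by_contra! hlt
  obtain ⟨R, hR⟩ : ∃ R, s R k < s' R k := by
    by_contra! hc
    exact hlt.not_ge (Finset.sum_le_sum fun R _ => hc R)
  have hk : 0 < s' R k := pos_of_gt hR
  obtain ⟨j, hj⟩ := hs.1.exists_pos_of_pos hs' hk
  have hflat : f k (load n s k) = f k (load n s' k) :=
    le_antisymm (hmono k hlt.le)
      ((hle R k hR j hj).trans (hs.cost_le_of_pos hj (hs'.mem_of_pos_s5 hk)))
  exact hplateau k ⟨_, _, hlt.ne', hflat.symm, rfl⟩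

lemma IsNash.load_eq_of_forall_cost_le (hmono : ∀ j, Monotone (f j)) (hs : IsNash n f μ s)
    (hplateau : ∀ j, ¬ IsPlateauHeight (f j) (cost n f s j)) (hs' : IsProfile n μ s')
    (hle : ∀ R k, s R k < s' R k → ∀ j, 0 < s R j → cost n f s' k ≤ cost n f s j)
    (k : Fin n) : load n s' k = load n s k :=
  (Finset.sum_eq_sum_iff_of_le fun k _ =>
    hs.load_le_of_forall_cost_le hmono hplateau hs' hle k).mp (hs'.sum_load_eq_s5 hs.1) k
    (Finset.mem_univ k)

end RSG

/-- If in some Nash equilibrium `s₀` the cost of each resource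
`j` is not a plateau height of `f j`, then every Nash equilibrium of the game
is super-strong. -/
theorem nash_is_super_strong (n : ℕ) (f : Fin n → ℝ≥0 → ℝ)
    (μ : Finset (Fin n) → ℝ≥0) (hmono : ∀ j, Monotone (f j))
    (s₀ : Finset (Fin n) → Fin n → ℝ≥0) (hs₀ : IsNash n f μ s₀)
    (hplateau : ∀ j : Fin n, ¬ IsPlateauHeight (f j) (cost n f s₀ j)) :
    ∀ s : Finset (Fin n) → Fin n → ℝ≥0, IsNash n f μ s → IsSuperStrong n f μ s := by
  intro s hs
  have hplateau_s : ∀ j, ¬ IsPlateauHeight (f j) (cost n f s j) := fun j => by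
    simpa only [cost, hs₀.load_eq_of_not_isPlateauHeight hmono hplateau hs j] using hplateau j
  refine ⟨hs, ?_⟩
  rintro ⟨s', hs', hle, R, k, hk, hlt⟩
  obtain ⟨j, hj⟩ := hs.1.exists_pos_of_pos hs' hk
  have hcost : cost n f s' k = cost n f s k := by
    rw [cost, cost, hs.load_eq_of_forall_cost_le hmono hplateau_s hs' hle k]
  have hk_cheapest : cost n f s j ≤ cost n f s k := hs.cost_le_of_pos hj (hs'.mem_of_pos_s5 hk)
  linarith [hlt j hj]
end

section
/- Let m ∈ ℕ and let f_1, …, f_m : ℝ≥0 → ℝ be nondecreasing continuous functions. Then every μ ≥ 0 admits an equalizing distribution for f_1,…,f_m (i.e., Eq⟨f_1,…,f_m⟩ is a totally defined real function) if and only if f_1(0) = f_2(0) = ⋯ = f_m(0). -/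
/-!
Equal bottoms are necessary because the mass `0` can only be split as `0 + ⋯ + 0`.
Conversely, proceed by induction on the index set. If the equalization `E` of a nonempty
family is total, it is nondecreasing (raising the common level raises every share) and its
range is an interval (a lower level is reached coordinatewise by the intermediate value
theorem), hence `E` is continuous. A new function `f_k` is then balanced against `E` by the
intermediate value theorem applied to `a ↦ E a - f_k (μ - a)` on `[0, μ]`.
-/

open scoped NNReal

/-- `EqDistOn m f S t h`: the total mass `t` admits an equalizing distribution
among the functions `(f j)_{j ∈ S}` with common value `h`; i.e., there are
nonnegative reals `(ν j)_{j ∈ S}` summing to `t` with `f j (ν j) = h` for all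
`j ∈ S`. When this holds, the equalization `Eq⟨f_j : j ∈ S⟩(t)` is defined and
equals `h`. -/
def EqDistOn (m : ℕ) (f : Fin m → ℝ≥0 → ℝ) (S : Finset (Fin m)) (t : ℝ≥0) (h : ℝ) : Prop :=
  ∃ ν : Fin m → ℝ≥0, ∑ j ∈ S, ν j = t ∧ ∀ j ∈ S, f j (ν j) = h

open Set Filter Topology

theorem Monotone.eventually_gt_nhds_of_ordConnected_range {α β : Type*} [LinearOrder α]
    [TopologicalSpace α] [OrderTopology α] [LinearOrder β] [DenselyOrdered β] {g : α → β}
    (hg : Monotone g) (hr : (range g).OrdConnected) {a : α} {b : β} (hb : b < g a) :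
    ∀ᶠ x in 𝓝 a, b < g x := by
  by_cases hlow : ∃ x, g x ≤ b
  · obtain ⟨x, hx⟩ := hlow
    obtain ⟨v, hbv, hva⟩ := exists_between hb
    obtain ⟨c, rfl⟩ := hr.out ⟨x, rfl⟩ ⟨a, rfl⟩ ⟨hx.trans hbv.le, hva.le⟩
    have hca : c < a := lt_of_not_ge fun hac => (hg hac).not_gt hva
    filter_upwards [Ioi_mem_nhds hca] with y hy
    exact hbv.trans_le (hg (le_of_lt hy))
  · simp only [not_exists, not_le] at hlow
    exact Eventually.of_forall hlow

theorem Monotone.continuous_of_ordConnected_range {α β : Type*} [LinearOrder α]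
    [TopologicalSpace α] [OrderTopology α] [LinearOrder β] [TopologicalSpace β] [OrderTopology β]
    [DenselyOrdered β] {g : α → β} (hg : Monotone g) (hr : (range g).OrdConnected) :
    Continuous g :=
  continuous_iff_continuousAt.2 fun _ => tendsto_order.2
    ⟨fun _ hb => hg.eventually_gt_nhds_of_ordConnected_range hr hb,
      fun _ hb => hg.dual.eventually_gt_nhds_of_ordConnected_range (β := βᵒᵈ) hr.dual hb⟩

section Equalization

variable {m : ℕ} {f : Fin m → ℝ≥0 → ℝ} {S : Finset (Fin m)}

theorem eqDistOn_zero {c₀ : ℝ} (hbot : ∀ j, f j 0 = c₀) : EqDistOn m f S 0 c₀ :=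
  ⟨0, by simp, fun j _ => hbot j⟩

theorem EqDistOn.apply_zero_eq {c : ℝ} (h : EqDistOn m f S 0 c) : ∀ j ∈ S, f j 0 = c := by
  obtain ⟨ν, hsum, hval⟩ := h
  intro j hj
  simpa [Finset.sum_eq_zero_iff.1 hsum j hj] using hval j hj

theorem EqDistOn.le_of_le (hS : S.Nonempty) (hmono : ∀ j, Monotone (f j))
    {t₁ t₂ : ℝ≥0} {c₁ c₂ : ℝ} (h₁ : EqDistOn m f S t₁ c₁) (h₂ : EqDistOn m f S t₂ c₂)
    (ht : t₁ ≤ t₂) : c₁ ≤ c₂ := by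
  obtain ⟨ν₁, hsum₁, hval₁⟩ := h₁
  obtain ⟨ν₂, hsum₂, hval₂⟩ := h₂
  by_contra! hlt
  have hshare : ∀ j ∈ S, ν₂ j < ν₁ j := fun j hj => lt_of_not_ge fun hle =>
    hlt.not_ge (by simpa only [hval₁ j hj, hval₂ j hj] using hmono j hle)
  have := Finset.sum_lt_sum_of_nonempty hS hshare
  rw [hsum₁, hsum₂] at this
  exact this.not_ge ht

theorem EqDistOn.unique (hS : S.Nonempty) (hmono : ∀ j, Monotone (f j)) {t : ℝ≥0} {c₁ c₂ : ℝ}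
    (h₁ : EqDistOn m f S t c₁) (h₂ : EqDistOn m f S t c₂) : c₁ = c₂ :=
  le_antisymm (h₁.le_of_le hS hmono h₂ le_rfl) (h₂.le_of_le hS hmono h₁ le_rfl)

theorem EqDistOn.bottom_le (hS : S.Nonempty) (hmono : ∀ j, Monotone (f j)) {c₀ : ℝ}
    (hbot : ∀ j, f j 0 = c₀) {t : ℝ≥0} {c : ℝ} (h : EqDistOn m f S t c) : c₀ ≤ c :=
  (eqDistOn_zero hbot).le_of_le hS hmono h zero_le

theorem EqDistOn.exists_of_mem_Icc (hcont : ∀ j, Continuous (f j)) {c₀ : ℝ}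
    (hbot : ∀ j, f j 0 = c₀) {t : ℝ≥0} {c c' : ℝ} (h : EqDistOn m f S t c)
    (hc' : c' ∈ Icc c₀ c) :
    ∃ t', EqDistOn m f S t' c' := by
  obtain ⟨ν, -, hval⟩ := h
  have hlevel : ∀ j ∈ S, ∃ x, f j x = c' := fun j hj => by
    have hmem : c' ∈ Icc (f j 0) (f j (ν j)) := by rwa [hbot j, hval j hj]
    obtain ⟨x, -, hx⟩ := intermediate_value_Icc zero_le (hcont j).continuousOn hmem
    exact ⟨x, hx⟩
  choose! x hx using hlevel
  exact ⟨_, x, rfl, hx⟩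

theorem continuous_of_forall_eqDistOn (hS : S.Nonempty) (hmono : ∀ j, Monotone (f j))
    (hcont : ∀ j, Continuous (f j)) {c₀ : ℝ} (hbot : ∀ j, f j 0 = c₀) {E : ℝ≥0 → ℝ}
    (hE : ∀ t, EqDistOn m f S t (E t)) : Continuous E := by
  have hEmono : Monotone E := fun t₁ t₂ ht => (hE t₁).le_of_le hS hmono (hE t₂) ht
  refine hEmono.continuous_of_ordConnected_range ⟨?_⟩
  rintro _ ⟨t₁, rfl⟩ _ ⟨t₂, rfl⟩ c ⟨hc₁, hc₂⟩
  obtain ⟨t', ht'⟩ := (hE t₂).exists_of_mem_Icc hcont hbot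
    ⟨((hE t₁).bottom_le hS hmono hbot).trans hc₁, hc₂⟩
  exact ⟨t', (hE t').unique hS hmono ht'⟩

theorem exists_eqDistOn_cons (hS : S.Nonempty) (hmono : ∀ j, Monotone (f j))
    (hcont : ∀ j, Continuous (f j)) {c₀ : ℝ} (hbot : ∀ j, f j 0 = c₀) {k : Fin m} (hk : k ∉ S)
    (htot : ∀ t, ∃ c, EqDistOn m f S t c) (t : ℝ≥0) :
    ∃ c, EqDistOn m f (S.cons k hk) t c := by
  choose E hE using htot
  have hE0 : E 0 = c₀ := (hE 0).unique hS hmono (eqDistOn_zero hbot)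
  have hbalance : Continuous fun a => E a - f k (t - a) :=
    (continuous_of_forall_eqDistOn hS hmono hcont hbot hE).sub
      ((hcont k).comp (continuous_const.sub continuous_id))
  obtain ⟨a, ⟨-, hat⟩, ha⟩ := intermediate_value_Icc zero_le hbalance.continuousOn
    ⟨sub_nonpos.2 (by rw [tsub_zero, hE0, ← hbot k]; exact hmono k zero_le),
      sub_nonneg.2 (by rw [tsub_self, hbot k]; exact (hE t).bottom_le hS hmono hbot)⟩
  obtain ⟨ν, hsum, hval⟩ := hE a
  refine ⟨E a, Function.update ν k (t - a), ?_, ?_⟩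
  · rw [Finset.sum_cons, Function.update_self, Finset.sum_congr rfl fun j hj =>
      Function.update_of_ne (ne_of_mem_of_not_mem hj hk) _ _, hsum, tsub_add_cancel_of_le hat]
  · refine (Finset.forall_mem_cons hk _).2 ⟨?_, fun j hj => ?_⟩
    · rw [Function.update_self]
      exact (sub_eq_zero.1 ha).symm
    · rw [Function.update_of_ne (ne_of_mem_of_not_mem hj hk)]
      exact hval j hj

theorem exists_eqDistOn_of_nonempty (hmono : ∀ j, Monotone (f j))
    (hcont : ∀ j, Continuous (f j)) {c₀ : ℝ} (hbot : ∀ j, f j 0 = c₀) (hS : S.Nonempty) :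
    ∀ t, ∃ c, EqDistOn m f S t c := by
  induction hS using Finset.Nonempty.cons_induction with
  | singleton j => exact fun t => ⟨f j t, fun _ => t, by simp, by simp⟩
  | cons k S hk hS ih => exact exists_eqDistOn_cons hS hmono hcont hbot hk ih

end Equalization

/-- For continuous nondecreasing `f_1, …, f_m`, every total
mass `μ ≥ 0` admits an equalizing distribution (i.e., the equalization is a
totally defined real function) iff `f_1(0) = f_2(0) = ⋯ = f_m(0)`. -/
theorem equalization_total_iff_same_bottom (m : ℕ) (hm : 0 < m)
    (f : Fin m → ℝ≥0 → ℝ) (hmono : ∀ j, Monotone (f j))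
    (hcont : ∀ j, Continuous (f j)) :
    (∀ μ : ℝ≥0, ∃ h : ℝ, EqDistOn m f Finset.univ μ h) ↔
      ∀ i j : Fin m, f i 0 = f j 0 := by
  constructor
  · intro htot i j
    obtain ⟨c, hc⟩ := htot 0
    rw [hc.apply_zero_eq i (Finset.mem_univ i), hc.apply_zero_eq j (Finset.mem_univ j)]
  · intro hbot
    exact exists_eqDistOn_of_nonempty hmono hcont (fun j => hbot j ⟨0, hm⟩)
      ⟨⟨0, hm⟩, Finset.mem_univ _⟩
end
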